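/- Let λ ∈ F with λ + λ̄ = 1 and let a ∈ F with a ≠ 0. Then ∑_{x ∈ F, x ≠ 0} ε(Tr_n(λ·x^(2^m+1)) + Tr_n(a·x)) equals −2^m − 1 if Tr_m(a·ā) = 0, and equals 2^m − 1 if Tr_m(a·ā) = 1. (Note a·ā ∈ K, so Tr_m applies.) -/

import Mathlib

open Finset

/-- Absolute trace-style sum `Tr_n : F → F` for `n = 2m`. -/
def trN (m : ℕ) {F : Type*} [Field F] (x : F) : F :=
  ∑ i ∈ Finset.range (2 * m), x ^ (2 ^ i)

/-- Trace-style sum `Tr_m : F → F` (meant for elements of the subfield `K`). -/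
def trM (m : ℕ) {F : Type*} [Field F] (x : F) : F :=
  ∑ i ∈ Finset.range m, x ^ (2 ^ i)

/-- `ε(0) = 1`, `ε(t) = -1` for `t ≠ 0`. -/
def eps {F : Type*} [Field F] [DecidableEq F] (t : F) : ℤ :=
  if t = 0 then 1 else -1

/-- Kloosterman sum `k_m(μ) = ∑_{x ∈ K, x ≠ 0} χ_m(x + μ x⁻¹)`. -/
def klooM (m : ℕ) {F : Type*} [Field F] [Fintype F] [DecidableEq F] (μ : F) : ℤ :=
  ∑ x ∈ Finset.univ.filter (fun x : F => x ^ (2 ^ m) = x ∧ x ≠ 0),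
    eps (trM m (x + μ * x⁻¹))

/-- Kloosterman sum over the big field: `k_n(μ) = ∑_{x ∈ F, x ≠ 0} χ_n(x + μ x⁻¹)`. -/
def klooN (m : ℕ) {F : Type*} [Field F] [Fintype F] [DecidableEq F] (μ : F) : ℤ :=
  ∑ x ∈ Finset.univ.filter (fun x : F => x ≠ 0), eps (trN m (x + μ * x⁻¹))

/-- Walsh transform of `h : F → F` (with values in `{0,1}`) at `a`. -/
def walsh (m : ℕ) {F : Type*} [Field F] [Fintype F] [DecidableEq F] (h : F → F) (a : F) : ℤ :=
  ∑ x : F, eps (h x + trN m (a * x))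

/-- The Boolean function `f_{λ,μ}(x) = Tr_n(λ x^{2^m+1}) + Tr_n(x)·Tr_n(μ x^{2^m-1})`. -/
def fFun (m : ℕ) {F : Type*} [Field F] (l μ : F) : F → F :=
  fun x => trN m (l * x ^ (2 ^ m + 1)) + trN m x * trN m (μ * x ^ (2 ^ m - 1))

/-- The Boolean function
`g_{λ,μ}(x) = (1 + Tr_n(x))·Tr_n(λ x^{2^m+1}) + Tr_n(x)·Tr_n(μ x^{2^m-1})`. -/
def gFun (m : ℕ) {F : Type*} [Field F] (l μ : F) : F → F :=
  fun x => (1 + trN m x) * trN m (l * x ^ (2 ^ m + 1)) +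
    trN m x * trN m (μ * x ^ (2 ^ m - 1))

/-!
Write `N x = x ^ (2 ^ m + 1)` for the norm from `F` to the fixed field `K` of `x ↦ x ^ 2 ^ m`.
Since `N x ∈ K` and `λ + λ̄ = 1`, `Tr_n (λ N x) = Tr_m (N x)`, and the substitution `x ↦ x + ā`
turns `Tr_m (N x) + Tr_n (a x)` into `Tr_m (N x) + Tr_m (a ā)`. So the sum over all of `F` is
`ε (Tr_m (a ā))` times `∑ ε (Tr_m (N x))`. The norm maps `F^*` onto `K^*` with fibres of size
`2^m + 1`: each fibre has at most `2^m + 1` points, `K^*` at most `2^m - 1`, and `F^*` has exactly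
their product. `Tr_m` is additive and takes the value `1` on `K` (the trace polynomial has too
small a degree to vanish on `F`), so it is balanced on `K`, and `∑ ε (Tr_m (N x)) = 1 - (2^m + 1)`.
Removing the term `x = 0` gives the two values.
-/

section CharTwo

variable {F : Type*} [Field F]

lemma trN_eq_trM_add_trM_pow (m : ℕ) (x : F) : trN m x = trM m x + trM m (x ^ 2 ^ m) := by
  simp only [trN, trM, two_mul, sum_range_add, ← pow_mul, ← pow_add]

lemma norm_pow_two_pow {m : ℕ} {x : F} (hx : (x ^ 2 ^ m) ^ 2 ^ m = x) :
    (x ^ (2 ^ m + 1)) ^ 2 ^ m = x ^ (2 ^ m + 1) := by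
  rw [pow_succ, mul_pow, hx, mul_comm]

variable [CharP F 2]

lemma trM_add (m : ℕ) (x y : F) : trM m (x + y) = trM m x + trM m y := by
  simp only [trM, add_pow_char_pow, sum_add_distrib]

lemma trN_add (m : ℕ) (x y : F) : trN m (x + y) = trN m x + trN m y :=
  trM_add (2 * m) x y

lemma trM_eq_zero_or_one {m : ℕ} {y : F} (hy : y ^ 2 ^ m = y) : trM m y = 0 ∨ trM m y = 1 := by
  refine IsIdempotentElem.iff_eq_zero_or_one.mp ?_
  have hsq : trM m y ^ 2 = ∑ i ∈ range m, y ^ 2 ^ (i + 1) := by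
    rw [trM, sum_pow_char]
    simp only [← pow_mul, ← pow_succ]
  have hshift := sum_range_succ' (fun i => y ^ 2 ^ i) m
  rw [sum_range_succ, hy, pow_zero, pow_one, add_left_inj] at hshift
  rw [IsIdempotentElem, ← sq, hsq, trM, hshift]

lemma trN_eq_zero {m : ℕ} {y : F} (hy : y ^ 2 ^ m = y) : trN m y = 0 := by
  rw [trN_eq_trM_add_trM_pow, hy, CharTwo.add_self_eq_zero]

lemma trN_mul_eq_trM {m : ℕ} {l y : F} (hl : l + l ^ 2 ^ m = 1) (hy : y ^ 2 ^ m = y) :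
    trN m (l * y) = trM m y := by
  rw [trN_eq_trM_add_trM_pow, mul_pow, hy, ← trM_add, ← add_mul, hl, one_mul]

lemma add_pow_two_pow_norm {m : ℕ} (x : F) {a : F} (ha : (a ^ 2 ^ m) ^ 2 ^ m = a) :
    (x + a ^ 2 ^ m) ^ (2 ^ m + 1) =
      x ^ (2 ^ m + 1) + (a * x + (a * x) ^ 2 ^ m) + a * a ^ 2 ^ m := by
  rw [pow_succ, add_pow_char_pow, ha, mul_pow]
  ring

lemma trM_norm_add_trN_shift {m : ℕ} (x : F) {a : F} (ha : (a ^ 2 ^ m) ^ 2 ^ m = a) :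
    trM m ((x + a ^ 2 ^ m) ^ (2 ^ m + 1)) + trN m (a * (x + a ^ 2 ^ m)) =
      trM m (x ^ (2 ^ m + 1)) + trM m (a * a ^ 2 ^ m) := by
  have hfix : (a * a ^ 2 ^ m) ^ 2 ^ m = a * a ^ 2 ^ m := by
    rw [← pow_succ', norm_pow_two_pow ha]
  rw [add_pow_two_pow_norm x ha, trM_add, trM_add, trM_add (x := a * x),
    ← trN_eq_trM_add_trM_pow, mul_add, trN_add, trN_eq_zero hfix]
  linear_combination CharTwo.add_self_eq_zero (trN m (a * x))

variable [DecidableEq F]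

lemma eps_add {u v : F} (hu : u = 0 ∨ u = 1) (hv : v = 0 ∨ v = 1) :
    eps (u + v) = eps u * eps v := by
  rcases hu with rfl | rfl <;> rcases hv with rfl | rfl <;>
    simp [eps, CharTwo.add_self_eq_zero]

end CharTwo

open Polynomial in
lemma exists_sum_range_pow_two_pow_ne_zero {F : Type*} [Field F] [Fintype F] {n : ℕ}
    (hn : 0 < n) (hcard : 2 ^ (n - 1) < Fintype.card F) :
    ∃ z : F, ∑ i ∈ range n, z ^ 2 ^ i ≠ 0 := by
  by_contra! h
  set P : F[X] := ∑ i ∈ range n, X ^ 2 ^ i with hP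
  have hcoeff : P.coeff (2 ^ (n - 1)) = 1 := by
    rw [hP, finsetSum_coeff, sum_eq_single (n - 1)]
    · simp
    · intro i _ hi
      rw [coeff_X_pow, if_neg]
      exact fun h => hi (Nat.pow_right_injective le_rfl h).symm
    · exact fun h => absurd (mem_range.2 (Nat.sub_lt hn one_pos)) h
  have hdeg : P.natDegree ≤ 2 ^ (n - 1) := by
    refine natDegree_sum_le_of_forall_le _ _ fun i hi => ?_
    rw [natDegree_X_pow]
    exact Nat.pow_le_pow_right two_pos (by rw [mem_range] at hi; omega)
  have hP0 : P = 0 :=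
    eq_zero_of_natDegree_lt_card_of_eval_eq_zero P Function.injective_id
      (fun z => by simpa [hP, eval_finsetSum] using h z) (hdeg.trans_lt hcard)
  simp [hP0] at hcoeff

lemma card_filter_pow_eq_le {R : Type*} [CommRing R] [IsDomain R] [Fintype R] [DecidableEq R]
    {n : ℕ} (hn : 0 < n) (u : R) : #{x | x ^ n = u} ≤ n := by
  calc #{x | x ^ n = u} ≤ (Polynomial.nthRoots n u).toFinset.card :=
        card_le_card fun x hx => by simpa [Polynomial.mem_nthRoots hn] using hx
    _ ≤ Multiset.card (Polynomial.nthRoots n u) := Multiset.toFinset_card_le _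
    _ ≤ n := Polynomial.card_nthRoots n u

lemma card_fiber_eq_of_card_mul_le {α β : Type*} [DecidableEq β] {s : Finset α} {t : Finset β}
    {f : α → β} (hf : ∀ x ∈ s, f x ∈ t) {b : ℕ} (hle : ∀ y ∈ t, #{x ∈ s | f x = y} ≤ b)
    (hcard : #t * b ≤ #s) : ∀ y ∈ t, #{x ∈ s | f x = y} = b := by
  have hsum : ∑ y ∈ t, #{x ∈ s | f x = y} = ∑ y ∈ t, b := by
    refine le_antisymm (sum_le_sum hle) ?_
    rwa [sum_const, smul_eq_mul, ← card_eq_sum_card_fiberwise hf]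
  exact (sum_eq_sum_iff_of_le hle).1 hsum

section FiniteField

variable {F : Type*} [Field F] [Fintype F] {m : ℕ}

lemma pow_two_pow_pow_two_pow_of_card (hcard : Fintype.card F = 2 ^ (2 * m)) (x : F) :
    (x ^ 2 ^ m) ^ 2 ^ m = x := by
  rw [← pow_mul, ← pow_add, ← two_mul, ← hcard, FiniteField.pow_card]

lemma exists_trM_eq_one [CharP F 2] (hcard : Fintype.card F = 2 ^ (2 * m)) (hm : 0 < m) :
    ∃ w : F, w ^ 2 ^ m = w ∧ trM m w = 1 := by
  obtain ⟨z, hz⟩ := exists_sum_range_pow_two_pow_ne_zero (F := F) (n := 2 * m) (by omega)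
    (by rw [hcard]; exact Nat.pow_lt_pow_right one_lt_two (by omega))
  have hw : (z + z ^ 2 ^ m) ^ 2 ^ m = z + z ^ 2 ^ m := by
    rw [add_pow_char_pow, pow_two_pow_pow_two_pow_of_card hcard, add_comm]
  refine ⟨_, hw, (trM_eq_zero_or_one hw).resolve_left ?_⟩
  rwa [trM_add, ← trN_eq_trM_add_trM_pow]

variable [DecidableEq F]

lemma pow_two_pow_add_one_mem_units (hcard : Fintype.card F = 2 ^ (2 * m)) {x : F}
    (hx : x ≠ 0) :
    x ^ (2 ^ m + 1) ∈ ({u | u ^ 2 ^ m = u ∧ u ≠ 0} : Finset F) := by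
  rw [mem_filter]
  exact ⟨mem_univ _, norm_pow_two_pow (pow_two_pow_pow_two_pow_of_card hcard x),
    pow_ne_zero _ hx⟩

lemma card_fiber_norm (hcard : Fintype.card F = 2 ^ (2 * m)) (hm : 0 < m) :
    ∀ u ∈ ({u | u ^ 2 ^ m = u ∧ u ≠ 0} : Finset F),
      #{x ∈ ({x | x ≠ 0} : Finset F) | x ^ (2 ^ m + 1) = u} = 2 ^ m + 1 := by
  have hq : 1 ≤ 2 ^ m := Nat.one_le_two_pow
  refine card_fiber_eq_of_card_mul_le
    (fun x hx => pow_two_pow_add_one_mem_units hcard (by simpa using hx)) (fun u _ => ?_) ?_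
  · exact (card_le_card (filter_subset_filter _ (subset_univ _))).trans
      (card_filter_pow_eq_le (Nat.succ_pos _) u)
  · have hK : #({u | u ^ 2 ^ m = u ∧ u ≠ 0} : Finset F) ≤ 2 ^ m - 1 := by
      refine (card_le_card fun u hu => ?_).trans
        (card_filter_pow_eq_le (Nat.sub_pos_of_lt (Nat.one_lt_two_pow hm.ne')) 1)
      simp only [mem_filter, mem_univ, true_and] at hu ⊢
      refine mul_right_cancel₀ hu.2 ?_
      rw [← pow_succ, Nat.sub_add_cancel hq, hu.1, one_mul]
    have hs : #({x | x ≠ 0} : Finset F) = 2 ^ m * 2 ^ m - 1 * 1 := by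
      rw [filter_ne', card_erase_of_mem (mem_univ _), card_univ, hcard, two_mul, pow_add]
    rw [hs, Nat.mul_self_sub_mul_self_eq, mul_comm (2 ^ m + 1)]
    exact Nat.mul_le_mul_right _ hK

variable [CharP F 2]

lemma sum_eps_trM_fixed (hcard : Fintype.card F = 2 ^ (2 * m)) (hm : 0 < m) :
    ∑ u ∈ ({u | u ^ 2 ^ m = u} : Finset F), eps (trM m u) = 0 := by
  obtain ⟨w, hw, htr⟩ := exists_trM_eq_one hcard hm
  have hw0 : w ≠ 0 := by rintro rfl; simp [trM] at htr
  refine sum_involution (fun u _ => u + w) (fun u hu => ?_) (fun u _ _ => by simpa using hw0)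
    (fun u hu => ?_) (fun u _ => by rw [add_assoc, CharTwo.add_self_eq_zero, add_zero])
  · simp only [mem_filter, mem_univ, true_and] at hu
    rw [trM_add, htr, eps_add (trM_eq_zero_or_one hu) (Or.inr rfl)]
    simp [eps]
  · simp only [mem_filter, mem_univ, true_and] at hu ⊢
    rw [add_pow_char_pow, hu, hw]

lemma sum_eps_trM_norm (hcard : Fintype.card F = 2 ^ (2 * m)) (hm : 0 < m) :
    ∑ x : F, eps (trM m (x ^ (2 ^ m + 1))) = -2 ^ m := by
  have h0 : eps (trM m (0 : F)) = 1 := by simp [trM, eps]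
  have hunits : ∑ u ∈ ({u | u ^ 2 ^ m = u ∧ u ≠ 0} : Finset F), eps (trM m u) = -1 := by
    have h := sum_eps_trM_fixed hcard hm
    rw [← add_sum_erase _ _ (a := (0 : F)) (by simp), ← filter_ne', filter_filter, h0] at h
    linarith
  have hfibers : ∑ x ∈ ({x | x ≠ 0} : Finset F), eps (trM m (x ^ (2 ^ m + 1))) =
      (2 ^ m + 1) * ∑ u ∈ ({u | u ^ 2 ^ m = u ∧ u ≠ 0} : Finset F), eps (trM m u) := by
    rw [← sum_fiberwise_of_maps_to' (g := fun x : F => x ^ (2 ^ m + 1))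
      (fun x hx => pow_two_pow_add_one_mem_units hcard (by simpa using hx))
      (fun u => eps (trM m u)), mul_sum]
    refine sum_congr rfl fun u hu => ?_
    rw [sum_const, card_fiber_norm hcard hm u hu, nsmul_eq_mul]
    norm_cast
  rw [← add_sum_erase _ _ (mem_univ (0 : F)), ← filter_ne', hfibers, hunits]
  simp [trM, eps]

lemma sum_eps_trM_norm_add_trN (hcard : Fintype.card F = 2 ^ (2 * m)) (hm : 0 < m) (a : F) :
    ∑ x : F, eps (trM m (x ^ (2 ^ m + 1)) + trN m (a * x)) =
      eps (trM m (a * a ^ 2 ^ m)) * -2 ^ m := by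
  have ha := pow_two_pow_pow_two_pow_of_card hcard a
  have hNa : (a * a ^ 2 ^ m) ^ 2 ^ m = a * a ^ 2 ^ m := by rw [← pow_succ', norm_pow_two_pow ha]
  rw [← Equiv.sum_comp (Equiv.addRight (a ^ 2 ^ m))
    fun x => eps (trM m (x ^ (2 ^ m + 1)) + trN m (a * x))]
  simp only [Equiv.coe_addRight, trM_norm_add_trN_shift _ ha]
  rw [sum_congr rfl fun x _ => eps_add
      (trM_eq_zero_or_one (norm_pow_two_pow (pow_two_pow_pow_two_pow_of_card hcard x)))
      (trM_eq_zero_or_one hNa),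
    ← sum_mul, sum_eps_trM_norm hcard hm, mul_comm]

end FiniteField

theorem stmt4_general (m : ℕ) (hm : 0 < m) (F : Type*) [Field F] [Fintype F] [DecidableEq F]
    (hcard : Fintype.card F = 2 ^ (2 * m))
    (l : F) (hl : l + l ^ (2 ^ m) = 1) (a : F) :
    (trM m (a * a ^ (2 ^ m)) = 0 →
      ∑ x ∈ Finset.univ.filter (fun x : F => x ≠ 0),
        eps (trN m (l * x ^ (2 ^ m + 1)) + trN m (a * x)) = -(2 ^ m : ℤ) - 1) ∧
    (trM m (a * a ^ (2 ^ m)) = 1 →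
      ∑ x ∈ Finset.univ.filter (fun x : F => x ≠ 0),
        eps (trN m (l * x ^ (2 ^ m + 1)) + trN m (a * x)) = (2 ^ m : ℤ) - 1) := by
  have : CharP F 2 := charP_of_card_eq_prime_pow hcard
  have h0 : eps (trM m ((0 : F) ^ (2 ^ m + 1)) + trN m (a * 0)) = 1 := by simp [trM, trN, eps]
  have hsum : ∑ x ∈ univ.filter (fun x : F => x ≠ 0),
      eps (trN m (l * x ^ (2 ^ m + 1)) + trN m (a * x)) =
        eps (trM m (a * a ^ 2 ^ m)) * -2 ^ m - 1 := by
    rw [← sum_eps_trM_norm_add_trN hcard hm a, filter_ne', ← add_sum_erase _ _ (mem_univ 0), h0,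
      add_sub_cancel_left]
    exact sum_congr rfl fun x _ => by
      rw [trN_mul_eq_trM hl (norm_pow_two_pow (pow_two_pow_pow_two_pow_of_card hcard x))]
  refine ⟨fun h => ?_, fun h => ?_⟩ <;> rw [hsum, h] <;> simp [eps]

theorem stmt4 (m : ℕ) (hm : 0 < m) (F : Type*) [Field F] [Fintype F] [DecidableEq F]
    (hcard : Fintype.card F = 2 ^ (2 * m))
    (l : F) (hl : l + l ^ (2 ^ m) = 1) (a : F) (ha : a ≠ 0) :
    (trM m (a * a ^ (2 ^ m)) = 0 →
      ∑ x ∈ Finset.univ.filter (fun x : F => x ≠ 0),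
        eps (trN m (l * x ^ (2 ^ m + 1)) + trN m (a * x)) = -(2 ^ m : ℤ) - 1) ∧
    (trM m (a * a ^ (2 ^ m)) = 1 →
      ∑ x ∈ Finset.univ.filter (fun x : F => x ≠ 0),
        eps (trN m (l * x ^ (2 ^ m + 1)) + trN m (a * x)) = (2 ^ m : ℤ) - 1) :=
  stmt4_general m hm F hcard l hl a
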